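/- arXiv:0801.1966 — 2 statements merged into one kernel-verified Lean document; each statement's English description precedes it below -/
import Mathlib

section
/- Let X be a set containing at least two distinct elements, and let L be any real-valued functional defined on all gambles on X such that L(f − f∘T) ≥ 0 and L(f∘T − f) ≥ 0 for every gamble f and every map T : X → X. Then there is no coherent prevision P on X with P(f) ≥ L(f) for all gambles f; in particular, there is no coherent prevision P on X satisfying P(f∘T) = P(f) for every gamble f and every map T : X → X. -/
def IsGamble {X : Type*} (f : X → ℝ) : Prop :=
  BddAbove (Set.range f) ∧ BddBelow (Set.range f)

def IsCoherentLowerPrevision {X : Type*} (L : (X → ℝ) → ℝ) : Prop :=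
  (∀ f : X → ℝ, IsGamble f → sInf (Set.range f) ≤ L f) ∧
  (∀ f g : X → ℝ, IsGamble f → IsGamble g → L f + L g ≤ L (f + g)) ∧
  (∀ f : X → ℝ, IsGamble f → ∀ c : ℝ, 0 ≤ c → L (c • f) = c * L f)

def IsCoherentPrevision {X : Type*} (P : (X → ℝ) → ℝ) : Prop :=
  (∀ f g : X → ℝ, IsGamble f → IsGamble g → P (f + g) = P f + P g) ∧
  (∀ f : X → ℝ, IsGamble f → sInf (Set.range f) ≤ P f)

def IsTransformationMonoid {X : Type*} (𝒯 : Set (X → X)) : Prop :=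
  id ∈ 𝒯 ∧ ∀ S ∈ 𝒯, ∀ T ∈ 𝒯, S ∘ T ∈ 𝒯

def Dominating {X : Type*} (L : (X → ℝ) → ℝ) : Set ((X → ℝ) → ℝ) :=
  {P | IsCoherentPrevision P ∧ ∀ f : X → ℝ, IsGamble f → L f ≤ P f}

/-!
An invariant coherent prevision is evaluation at every point: invariance under the constant map
`fun _ => x` gives `P f = P (fun _ => f x) = f x`, and a gamble separating two points makes this
impossible. A coherent prevision dominating `L` is invariant, because `P (f - f ∘ T)` and
`P (f ∘ T - f)` are both nonnegative and sum to `P 0 = 0`.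
-/

section

variable {X : Type*}

lemma isGamble_of_mem_Icc {f : X → ℝ} {a b : ℝ} (h : ∀ x, f x ∈ Set.Icc a b) : IsGamble f :=
  ⟨⟨b, Set.forall_mem_range.2 fun x => (h x).2⟩, ⟨a, Set.forall_mem_range.2 fun x => (h x).1⟩⟩

lemma isGamble_const (c : ℝ) : IsGamble (fun _ : X => c) :=
  isGamble_of_mem_Icc fun _ => Set.left_mem_Icc.2 le_rfl

namespace IsGamble

variable {f g : X → ℝ}

lemma neg (hf : IsGamble f) : IsGamble (-f) :=
  ⟨hf.2.range_neg, hf.1.range_neg⟩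

lemma add (hf : IsGamble f) (hg : IsGamble g) : IsGamble (f + g) :=
  ⟨hf.1.range_add hg.1, hf.2.range_add hg.2⟩

lemma sub (hf : IsGamble f) (hg : IsGamble g) : IsGamble (f - g) :=
  sub_eq_add_neg f g ▸ hf.add hg.neg

lemma comp {Y : Type*} (hf : IsGamble f) (T : Y → X) : IsGamble (f ∘ T) :=
  ⟨hf.1.range_comp_right T, hf.2.range_comp_right T⟩

end IsGamble

namespace IsCoherentPrevision

variable {P : (X → ℝ) → ℝ} {f g : X → ℝ}

lemma map_sub (hP : IsCoherentPrevision P) (hf : IsGamble f) (hg : IsGamble g) :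
    P (f - g) = P f - P g := by
  have h := hP.1 (f - g) g (hf.sub hg) hg
  rw [sub_add_cancel] at h
  linarith

lemma map_zero (hP : IsCoherentPrevision P) : P 0 = 0 := by
  simpa using hP.map_sub (isGamble_const (0 : ℝ)) (isGamble_const 0)

lemma map_neg (hP : IsCoherentPrevision P) (hf : IsGamble f) : P (-f) = -P f := by
  have h := hP.map_sub (f := 0) (isGamble_const 0) hf
  rwa [zero_sub, hP.map_zero, zero_sub] at h

lemma map_const [Nonempty X] (hP : IsCoherentPrevision P) (c : ℝ) : P (fun _ : X => c) = c := by
  have lower (c : ℝ) : c ≤ P (fun _ : X => c) := by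
    simpa [Set.range_const] using hP.2 _ (isGamble_const c)
  have upper : -c ≤ -P (fun _ : X => c) := by
    rw [← hP.map_neg (isGamble_const c)]
    exact lower (-c)
  linarith [lower c]

lemma eq_of_map_sub_nonneg (hP : IsCoherentPrevision P) (hf : IsGamble f) (hg : IsGamble g)
    (hfg : 0 ≤ P (f - g)) (hgf : 0 ≤ P (g - f)) : P f = P g := by
  rw [hP.map_sub hf hg] at hfg
  rw [hP.map_sub hg hf] at hgf
  linarith

lemma map_comp_eq_of_le {L : (X → ℝ) → ℝ} (hP : IsCoherentPrevision P)
    (hL : ∀ f : X → ℝ, IsGamble f → ∀ T : X → X, 0 ≤ L (f - f ∘ T) ∧ 0 ≤ L (f ∘ T - f))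
    (hLP : ∀ f : X → ℝ, IsGamble f → L f ≤ P f) (hf : IsGamble f) (T : X → X) :
    P (f ∘ T) = P f :=
  have hfT := hf.comp T
  hP.eq_of_map_sub_nonneg hfT hf ((hL f hf T).2.trans (hLP _ (hfT.sub hf)))
    ((hL f hf T).1.trans (hLP _ (hf.sub hfT)))

lemma eq_apply_of_map_comp_eq (hP : IsCoherentPrevision P)
    (hinv : ∀ f : X → ℝ, IsGamble f → ∀ T : X → X, P (f ∘ T) = P f) (hf : IsGamble f) (x : X) :
    P f = f x := by
  have : Nonempty X := ⟨x⟩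
  rw [← hinv f hf (fun _ => x)]
  exact hP.map_const (f x)

end IsCoherentPrevision

lemma not_exists_coherentPrevision_map_comp_eq {x₀ x₁ : X} (hx : x₀ ≠ x₁) :
    ¬ ∃ P : (X → ℝ) → ℝ, IsCoherentPrevision P ∧
        ∀ f : X → ℝ, IsGamble f → ∀ T : X → X, P (f ∘ T) = P f := by
  classical
  rintro ⟨P, hP, hinv⟩
  let f : X → ℝ := fun x => if x = x₀ then 1 else 0
  have hf : IsGamble f := isGamble_of_mem_Icc (a := 0) (b := 1) fun x => by
    by_cases h : x = x₀ <;> simp [f, h]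
  have h : f x₀ = f x₁ :=
    (hP.eq_apply_of_map_comp_eq hinv hf x₀).symm.trans (hP.eq_apply_of_map_comp_eq hinv hf x₁)
  simp [f, hx.symm] at h

end

theorem stmt4 (X : Type*) (x₀ x₁ : X) (hx : x₀ ≠ x₁) (L : (X → ℝ) → ℝ)
    (hinv : ∀ f : X → ℝ, IsGamble f → ∀ T : X → X,
      0 ≤ L (f - f ∘ T) ∧ 0 ≤ L (f ∘ T - f)) :
    (¬ ∃ P : (X → ℝ) → ℝ, IsCoherentPrevision P ∧
        ∀ f : X → ℝ, IsGamble f → L f ≤ P f) ∧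
    (¬ ∃ P : (X → ℝ) → ℝ, IsCoherentPrevision P ∧
        ∀ f : X → ℝ, IsGamble f → ∀ T : X → X, P (f ∘ T) = P f) := by
  refine ⟨?_, not_exists_coherentPrevision_map_comp_eq hx⟩
  rintro ⟨P, hP, hLP⟩
  exact not_exists_coherentPrevision_map_comp_eq hx
    ⟨P, hP, fun f hf T => hP.map_comp_eq_of_le hinv hLP hf T⟩
end

section
/- Let f : ℕ → ℝ be a bounded sequence. Then the following chain of inequalities holds: liminf_{n→∞} f(n) ≤ sup_{n≥1} inf_{k≥0} (1/n) Σ_{ℓ=k}^{k+n−1} f(ℓ) ≤ liminf_{n→∞} (1/n) Σ_{ℓ=0}^{n−1} f(ℓ) ≤ limsup_{n→∞} (1/n) Σ_{ℓ=0}^{n−1} f(ℓ) ≤ inf_{n≥1} sup_{k≥0} (1/n) Σ_{ℓ=k}^{k+n−1} f(ℓ) ≤ limsup_{n→∞} f(n). Moreover: (a) if lim_{n→∞} f(n) exists, then all six quantities are equal to this limit; (b) if f is periodic with period m ≥ 1 (f(n+m) = f(n) for all n), then the four middle quantities are all equal to (1/m) Σ_{r=0}^{m−1} f(r); (c) if f(n)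 = 0 for all but finitely many n, then the four middle quantities are all equal to 0. -/
noncomputable def lowWin (f : ℕ → ℝ) : ℝ :=
  ⨆ n : ℕ, ⨅ k : ℕ, (∑ ℓ ∈ Finset.range (n+1), f (k + ℓ)) / ((n : ℝ) + 1)

noncomputable def upWin (f : ℕ → ℝ) : ℝ :=
  ⨅ n : ℕ, ⨆ k : ℕ, (∑ ℓ ∈ Finset.range (n+1), f (k + ℓ)) / ((n : ℝ) + 1)

noncomputable def cesaro (f : ℕ → ℝ) (n : ℕ) : ℝ :=
  (∑ ℓ ∈ Finset.range n, f ℓ) / (n : ℝ)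


open Filter Finset Topology

lemma IsGamble.exists_abs_le {X : Type*} {f : X → ℝ} (hf : IsGamble f) :
    ∃ B, ∀ x, |f x| ≤ B := by
  obtain ⟨B, hB⟩ := isBounded_iff_forall_norm_le.1
    (isBounded_iff_bddBelow_bddAbove.2 ⟨hf.2, hf.1⟩)
  exact ⟨B, fun x => hB _ (Set.mem_range_self x)⟩

lemma Real.iSup_neg_eq_neg_iInf {ι : Sort*} (g : ι → ℝ) : ⨆ i, -g i = -⨅ i, g i := by
  simpa using (Real.mul_iInf_of_nonpos (r := -1) (by norm_num) g).symm

lemma Real.iInf_neg_eq_neg_iSup {ι : Sort*} (g : ι → ℝ) : ⨅ i, -g i = -⨆ i, g i := by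
  simpa using (Real.mul_iSup_of_nonpos (r := -1) (by norm_num) g).symm

lemma Real.liminf_neg {α : Type*} (u : α → ℝ) (l : Filter α) :
    liminf (-u) l = -limsup u l := by
  rw [liminf_eq, limsup_eq, ← Real.sSup_neg]
  congr 1
  ext a
  simp [le_neg]

lemma Function.Periodic.sum_range_shift {M : Type*} [AddCancelCommMonoid M] {f : ℕ → M} {m : ℕ}
    (h : Function.Periodic f m) (k : ℕ) :
    ∑ ℓ ∈ range m, f (k + ℓ) = ∑ ℓ ∈ range m, f ℓ := by
  induction k with
  | zero => simp
  | succ k ih =>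
    rw [← ih]
    have hsplit := (sum_range_succ' (fun ℓ => f (k + ℓ)) m).symm.trans
      (sum_range_succ (fun ℓ => f (k + ℓ)) m)
    rw [h k] at hsplit
    simpa only [add_assoc, add_comm 1, add_zero] using add_right_cancel hsplit

lemma tendsto_zero_of_finite_support {M : Type*} [TopologicalSpace M] [Zero M] {f : ℕ → M}
    (h : {n | f n ≠ 0}.Finite) : Tendsto f atTop (𝓝 0) := by
  refine tendsto_const_nhds.congr' ?_
  rw [← Nat.cofinite_eq_atTop, EventuallyEq, eventually_cofinite]
  simpa [eq_comm] using h

lemma sum_window_ge_of_eventually_ge {f : ℕ → ℝ} {b c : ℝ} {N : ℕ} (hbc : b ≤ c)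
    (hb : ∀ n, b ≤ f n) (hN : ∀ n ≥ N, c ≤ f n) (p k : ℕ) :
    p * c - N * (c - b) ≤ ∑ ℓ ∈ range p, f (k + ℓ) := by
  have hcount : #{ℓ ∈ range p | k + ℓ < N} ≤ N :=
    (card_le_card fun ℓ hℓ => by simp at hℓ ⊢; omega).trans (card_range N).le
  calc p * c - N * (c - b) ≤ p * c - #{ℓ ∈ range p | k + ℓ < N} * (c - b) := by
        gcongr
    _ = ∑ ℓ ∈ range p, (c - (c - b) * if k + ℓ < N then 1 else 0) := by
        rw [sum_sub_distrib, sum_const, card_range, ← mul_sum, sum_boole, nsmul_eq_mul]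
        ring
    _ ≤ ∑ ℓ ∈ range p, f (k + ℓ) := by
        refine sum_le_sum fun ℓ _ => ?_
        split_ifs with hℓ
        · simpa using hb (k + ℓ)
        · simpa using hN (k + ℓ) (by omega)

lemma sum_range_ge_of_sum_window_ge {f : ℕ → ℝ} {b I : ℝ} {p : ℕ} (hp : 0 < p) (hbI : b ≤ I)
    (hb : ∀ n, b ≤ f n) (hwin : ∀ k, p * I ≤ ∑ ℓ ∈ range p, f (k + ℓ)) (m : ℕ) :
    m * I - p * (I - b) ≤ ∑ ℓ ∈ range m, f ℓ := by
  have hblocks : ∀ q : ℕ, (p * q : ℕ) * I ≤ ∑ ℓ ∈ range (p * q), f ℓ := by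
    intro q
    induction q with
    | zero => simp
    | succ q ih =>
      rw [Nat.mul_succ, sum_range_add]
      push_cast at ih ⊢
      linarith [hwin (p * q)]
  have hrest : ∀ r : ℕ, r * b ≤ ∑ ℓ ∈ range r, f (p * (m / p) + ℓ) := fun r => by
    simpa using card_nsmul_le_sum (range r) _ b fun ℓ _ => hb _
  have hr : ((m % p : ℕ) : ℝ) ≤ p := by exact_mod_cast (Nat.mod_lt m hp).le
  have hm : (m : ℝ) = (p * (m / p) : ℕ) + (m % p : ℕ) := by
    exact_mod_cast (Nat.div_add_mod m p).symm
  calc m * I - p * (I - b) ≤ (p * (m / p) : ℕ) * I + (m % p : ℕ) * b := by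
        rw [hm]; nlinarith
    _ ≤ ∑ ℓ ∈ range (p * (m / p) + m % p), f ℓ := by
        rw [sum_range_add]; exact add_le_add (hblocks _) (hrest _)
    _ = ∑ ℓ ∈ range m, f ℓ := by rw [Nat.div_add_mod]

noncomputable def windowAvg (f : ℕ → ℝ) (n k : ℕ) : ℝ :=
  (∑ ℓ ∈ range n, f (k + ℓ)) / n

lemma lowWin_eq_iSup_iInf_windowAvg (f : ℕ → ℝ) :
    lowWin f = ⨆ n : ℕ, ⨅ k : ℕ, windowAvg f (n + 1) k := by
  simp [lowWin, windowAvg]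

lemma upWin_eq_iInf_iSup_windowAvg (f : ℕ → ℝ) :
    upWin f = ⨅ n : ℕ, ⨆ k : ℕ, windowAvg f (n + 1) k := by
  simp [upWin, windowAvg]

lemma cesaro_eq_windowAvg (f : ℕ → ℝ) (n : ℕ) : cesaro f n = windowAvg f n 0 := by
  simp [cesaro, windowAvg]

lemma windowAvg_neg (f : ℕ → ℝ) (n k : ℕ) : windowAvg (-f) n k = -windowAvg f n k := by
  simp [windowAvg, neg_div]

lemma upWin_eq_neg_lowWin_neg (f : ℕ → ℝ) : upWin f = -lowWin (-f) := by
  simp only [lowWin_eq_iSup_iInf_windowAvg, upWin_eq_iInf_iSup_windowAvg, windowAvg_neg,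
    Real.iInf_neg_eq_neg_iSup, Real.iSup_neg_eq_neg_iInf, neg_neg]

lemma cesaro_neg (f : ℕ → ℝ) : cesaro (-f) = -cesaro f := by
  ext n
  simp [cesaro_eq_windowAvg, windowAvg_neg]

section Bounded

variable {f : ℕ → ℝ} {B : ℝ}

lemma abs_windowAvg_le (hB : ∀ n, |f n| ≤ B) (n k : ℕ) : |windowAvg f n k| ≤ B := by
  have hB0 : 0 ≤ B := (abs_nonneg _).trans (hB 0)
  rcases n.eq_zero_or_pos with rfl | hn
  · simpa [windowAvg] using hB0
  have hn' : (0 : ℝ) < n := by exact_mod_cast hn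
  rw [windowAvg, abs_div, Nat.abs_cast, div_le_iff₀ hn']
  calc |∑ ℓ ∈ range n, f (k + ℓ)| ≤ ∑ ℓ ∈ range n, |f (k + ℓ)| := abs_sum_le_sum_abs _ _
    _ ≤ #(range n) • B := sum_le_card_nsmul _ _ _ fun ℓ _ => hB _
    _ = B * n := by rw [card_range, nsmul_eq_mul, mul_comm]

lemma abs_cesaro_le (hB : ∀ n, |f n| ≤ B) (n : ℕ) : |cesaro f n| ≤ B := by
  rw [cesaro_eq_windowAvg]
  exact abs_windowAvg_le hB n 0

lemma bddBelow_range_windowAvg (hB : ∀ n, |f n| ≤ B) (n : ℕ) :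
    BddBelow (Set.range (windowAvg f n)) :=
  ⟨-B, by rintro _ ⟨k, rfl⟩; exact (abs_le.1 (abs_windowAvg_le hB n k)).1⟩

lemma bddAbove_range_iInf_windowAvg (hB : ∀ n, |f n| ≤ B) :
    BddAbove (Set.range fun n => ⨅ k, windowAvg f (n + 1) k) := by
  refine ⟨B, ?_⟩
  rintro _ ⟨n, rfl⟩
  exact (ciInf_le (bddBelow_range_windowAvg hB _) 0).trans (abs_le.1 (abs_windowAvg_le hB _ 0)).2

lemma iInf_windowAvg_le_lowWin (hB : ∀ n, |f n| ≤ B) {p : ℕ} (hp : 0 < p) :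
    ⨅ k, windowAvg f p k ≤ lowWin f := by
  obtain ⟨n, rfl⟩ : ∃ n, p = n + 1 := ⟨p - 1, by omega⟩
  rw [lowWin_eq_iSup_iInf_windowAvg]
  exact le_ciSup (bddAbove_range_iInf_windowAvg hB) n

lemma upWin_le_iSup_windowAvg (hB : ∀ n, |f n| ≤ B) {p : ℕ} (hp : 0 < p) :
    upWin f ≤ ⨆ k, windowAvg f p k := by
  have hB' : ∀ n, |(-f) n| ≤ B := by simpa using hB
  have := iInf_windowAvg_le_lowWin hB' hp
  simp only [windowAvg_neg, Real.iInf_neg_eq_neg_iSup] at this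
  rw [upWin_eq_neg_lowWin_neg]
  linarith

lemma liminf_le_lowWin (hB : ∀ n, |f n| ≤ B) : liminf f atTop ≤ lowWin f := by
  have hlow : ∀ n, -B ≤ f n := fun n => (abs_le.1 (hB n)).1
  refine liminf_le_of_le (isBoundedUnder_of ⟨-B, hlow⟩) fun c hc => ?_
  obtain ⟨N, hN⟩ := eventually_atTop.1 hc
  set c' := max c (-B)
  have hN' : ∀ n ≥ N, c' ≤ f n := fun n hn => max_le (hN n hn) (hlow n)
  have hlim : Tendsto (fun p : ℕ => c' - N * (c' + B) / p) atTop (𝓝 c') := by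
    simpa using tendsto_const_nhds.sub (tendsto_const_div_atTop_nhds_zero_nat (N * (c' + B)))
  refine (le_max_left c (-B)).trans (le_of_tendsto hlim (eventually_atTop.2 ⟨1, fun p hp => ?_⟩))
  have hp' : (0 : ℝ) < p := by exact_mod_cast hp
  refine le_trans (le_ciInf fun k => ?_) (iInf_windowAvg_le_lowWin hB hp)
  rw [windowAvg, le_div_iff₀ hp', sub_mul, div_mul_cancel₀ _ hp'.ne']
  simpa [mul_comm] using sum_window_ge_of_eventually_ge (le_max_right c (-B)) hlow hN' p k

lemma isBoundedUnder_le_cesaro (hB : ∀ n, |f n| ≤ B) : IsBoundedUnder (· ≤ ·) atTop (cesaro f) :=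
  isBoundedUnder_of ⟨B, fun n => (abs_le.1 (abs_cesaro_le hB n)).2⟩

lemma isBoundedUnder_ge_cesaro (hB : ∀ n, |f n| ≤ B) : IsBoundedUnder (· ≥ ·) atTop (cesaro f) :=
  isBoundedUnder_of ⟨-B, fun n => (abs_le.1 (abs_cesaro_le hB n)).1⟩

lemma lowWin_le_liminf_cesaro (hB : ∀ n, |f n| ≤ B) : lowWin f ≤ liminf (cesaro f) atTop := by
  have hlow : ∀ n, -B ≤ f n := fun n => (abs_le.1 (hB n)).1
  rw [lowWin_eq_iSup_iInf_windowAvg]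
  refine ciSup_le fun n => ?_
  set I := ⨅ k, windowAvg f (n + 1) k
  have hwin : ∀ k, ((n + 1 : ℕ) : ℝ) * I ≤ ∑ ℓ ∈ range (n + 1), f (k + ℓ) := fun k => by
    have := ciInf_le (bddBelow_range_windowAvg hB (n + 1)) k
    rwa [windowAvg, le_div_iff₀ (by positivity), mul_comm] at this
  have hBI : -B ≤ I := le_ciInf fun k => (abs_le.1 (abs_windowAvg_le hB _ k)).1
  have hces : ∀ m ≥ 1, I - (n + 1 : ℕ) * (I + B) / m ≤ cesaro f m := fun m hm => by
    have hm' : (0 : ℝ) < m := by exact_mod_cast hm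
    rw [cesaro, le_div_iff₀ hm', sub_mul, div_mul_cancel₀ _ hm'.ne', mul_comm]
    simpa using sum_range_ge_of_sum_window_ge n.succ_pos hBI hlow hwin m
  have hlim : Tendsto (fun m : ℕ => I - (n + 1 : ℕ) * (I + B) / m) atTop (𝓝 I) := by
    simpa using
      tendsto_const_nhds.sub (tendsto_const_div_atTop_nhds_zero_nat ((n + 1 : ℕ) * (I + B)))
  calc I = liminf (fun m : ℕ => I - (n + 1 : ℕ) * (I + B) / m) atTop := hlim.liminf_eq.symm
    _ ≤ liminf (cesaro f) atTop :=
      liminf_le_liminf (eventually_atTop.2 ⟨1, hces⟩) hlim.isBoundedUnder_ge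
        (isBoundedUnder_le_cesaro hB).isCoboundedUnder_ge

lemma limsup_cesaro_le_upWin (hB : ∀ n, |f n| ≤ B) : limsup (cesaro f) atTop ≤ upWin f := by
  have := lowWin_le_liminf_cesaro (f := -f) (by simpa using hB)
  rw [cesaro_neg, Real.liminf_neg] at this
  rw [upWin_eq_neg_lowWin_neg]
  linarith

lemma upWin_le_limsup (hB : ∀ n, |f n| ≤ B) : upWin f ≤ limsup f atTop := by
  have := liminf_le_lowWin (f := -f) (by simpa using hB)
  rw [Real.liminf_neg] at this
  rw [upWin_eq_neg_lowWin_neg]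
  linarith

lemma le_lowWin_of_periodic (hB : ∀ n, |f n| ≤ B) {m : ℕ} (hm : 0 < m)
    (h : Function.Periodic f m) : (∑ r ∈ range m, f r) / m ≤ lowWin f := by
  simpa [windowAvg, h.sum_range_shift] using iInf_windowAvg_le_lowWin hB hm

lemma upWin_le_of_periodic (hB : ∀ n, |f n| ≤ B) {m : ℕ} (hm : 0 < m)
    (h : Function.Periodic f m) : upWin f ≤ (∑ r ∈ range m, f r) / m := by
  simpa [windowAvg, h.sum_range_shift] using upWin_le_iSup_windowAvg hB hm

end Bounded

theorem stmt15 (f : ℕ → ℝ) (hf : IsGamble f) :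
    (Filter.liminf f Filter.atTop ≤ lowWin f) ∧
    (lowWin f ≤ Filter.liminf (cesaro f) Filter.atTop) ∧
    (Filter.liminf (cesaro f) Filter.atTop ≤ Filter.limsup (cesaro f) Filter.atTop) ∧
    (Filter.limsup (cesaro f) Filter.atTop ≤ upWin f) ∧
    (upWin f ≤ Filter.limsup f Filter.atTop) ∧
    (∀ a : ℝ, Filter.Tendsto f Filter.atTop (nhds a) →
      Filter.liminf f Filter.atTop = a ∧ lowWin f = a ∧
      Filter.liminf (cesaro f) Filter.atTop = a ∧
      Filter.limsup (cesaro f) Filter.atTop = a ∧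
      upWin f = a ∧ Filter.limsup f Filter.atTop = a) ∧
    (∀ m : ℕ, 1 ≤ m → (∀ n : ℕ, f (n + m) = f n) →
      lowWin f = (∑ r ∈ Finset.range m, f r) / (m : ℝ) ∧
      Filter.liminf (cesaro f) Filter.atTop = (∑ r ∈ Finset.range m, f r) / (m : ℝ) ∧
      Filter.limsup (cesaro f) Filter.atTop = (∑ r ∈ Finset.range m, f r) / (m : ℝ) ∧
      upWin f = (∑ r ∈ Finset.range m, f r) / (m : ℝ)) ∧
    ({n : ℕ | f n ≠ 0}.Finite →
      lowWin f = 0 ∧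
      Filter.liminf (cesaro f) Filter.atTop = 0 ∧
      Filter.limsup (cesaro f) Filter.atTop = 0 ∧
      upWin f = 0) := by
  obtain ⟨B, hB⟩ := hf.exists_abs_le
  have h1 := liminf_le_lowWin hB
  have h2 := lowWin_le_liminf_cesaro hB
  have h3 := liminf_le_limsup (isBoundedUnder_le_cesaro hB) (isBoundedUnder_ge_cesaro hB)
  have h4 := limsup_cesaro_le_upWin hB
  have h5 := upWin_le_limsup hB
  have hlim : ∀ a : ℝ, Tendsto f atTop (𝓝 a) →
      liminf f atTop = a ∧ lowWin f = a ∧ liminf (cesaro f) atTop = a ∧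
      limsup (cesaro f) atTop = a ∧ upWin f = a ∧ limsup f atTop = a := fun a ha => by
    have hinf := ha.liminf_eq
    have hsup := ha.limsup_eq
    refine ⟨hinf, ?_, ?_, ?_, ?_, hsup⟩ <;> linarith
  refine ⟨h1, h2, h3, h4, h5, hlim, fun m hm hper => ?_, fun hfin => ?_⟩
  · have hlow := le_lowWin_of_periodic hB hm hper
    have hup := upWin_le_of_periodic hB hm hper
    refine ⟨?_, ?_, ?_, ?_⟩ <;> linarith
  · obtain ⟨-, hlow, hinf, hsup, hup, -⟩ := hlim 0 (tendsto_zero_of_finite_support hfin)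
    exact ⟨hlow, hinf, hsup, hup⟩
end
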